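/- Let A = {x₁,…,xₙ} be a set of n distinct positive real numbers, and let S = {(xᵢ,0), (−xᵢ,0), (0,xᵢ), (0,−xᵢ) : 1 ≤ i ≤ n}. For each i, the point (xᵢ,0) is adjacent to (0,xᵢ) in the Delaunay triangulation of S ∪ {(0,0)}: the circle with center (xᵢ,xᵢ) and radius xᵢ passes through (xᵢ,0) and (0,xᵢ) and contains no other point of S ∪ {(0,0)} in its closed disk except these two. -/

import Mathlib

open Metric Set

noncomputable section

abbrev Pt : Type := EuclideanSpace ℝ (Fin 2)

def pt (a b : ℝ) : Pt := WithLp.toLp 2 ![a, b]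

/-- General position: no 3 collinear, no 4 cocircular. -/
def GenPos (S : Set Pt) : Prop :=
  (∀ T ⊆ S, T.ncard = 3 → ¬ Collinear ℝ T) ∧
  (∀ T ⊆ S, T.ncard = 4 → ¬ ∃ (c : Pt) (r : ℝ), ∀ p ∈ T, dist p c = r)

/-- An empty circle through `p` and `q` witnessing Delaunay adjacency. -/
def EmptyCircle (S : Set Pt) (p q : Pt) : Prop :=
  ∃ (c : Pt) (r : ℝ), dist p c = r ∧ dist q c = r ∧
    ∀ s ∈ S, s ≠ p → s ≠ q → r < dist s c

/-- The Delaunay triangulation of `S` viewed as a graph on the plane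
(vertices outside `S` are isolated). -/
def DelaunayGraph (S : Set Pt) : SimpleGraph Pt where
  Adj p q := p ≠ q ∧ p ∈ S ∧ q ∈ S ∧ EmptyCircle S p q
  symm := by
    constructor
    rintro p q ⟨hne, hp, hq, c, r, h1, h2, h3⟩
    exact ⟨hne.symm, hq, hp, c, r, h2, h1, fun s hs h1' h2' => h3 s hs h2' h1'⟩
  loopless := ⟨fun p h => h.1 rfl⟩

/-- `p` is a vertex of the convex hull of `S`. -/
def HullVertex (S : Set Pt) (p : Pt) : Prop :=
  p ∈ S ∧ p ∉ convexHull ℝ (S \ {p})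

/-- Delaunay depth of a point of `S`: one plus the graph distance in the
Delaunay triangulation to the set of convex-hull vertices. -/
def delaunayDepth (S : Set Pt) (p : Pt) : ℕ :=
  1 + sInf {d : ℕ | ∃ h : Pt, HullVertex S h ∧ (DelaunayGraph S).dist p h = d}

/-- Delaunay depth of a query point `p` relative to `S`: its depth in `S ∪ {p}`. -/
def relDepth (S : Set Pt) (p : Pt) : ℕ := delaunayDepth (insert p S) p

/-- The segment corresponding to an (unordered) edge. -/
def edgeSeg (e : Sym2 Pt) : Set Pt :=
  Sym2.lift ⟨fun a b => segment ℝ a b, fun a b => segment_symm ℝ a b⟩ e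

/-- The closed polygonal curve drawn by a closed walk of the graph. -/
def walkCurve {G : SimpleGraph Pt} {p : Pt} (w : G.Walk p p) : Set Pt :=
  ⋃ e ∈ w.edges, edgeSeg e

/-- `x` lies in the bounded open region enclosed by the curve. -/
def InsideCurve (curve : Set Pt) (x : Pt) : Prop :=
  x ∉ curve ∧ Bornology.IsBounded (connectedComponentIn curveᶜ x)

/-- The element-uniqueness gadget: the four points `(±xᵢ,0), (0,±xᵢ)` for each `i`. -/
def gadget (n : ℕ) (x : Fin n → ℝ) : Set Pt :=
  ⋃ i : Fin n, {pt (x i) 0, pt (-(x i)) 0, pt 0 (x i), pt 0 (-(x i))}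

/-!
The circle of centre `(r, r)` and radius `r` is tangent to both coordinate axes, at `(r, 0)`
and `(0, r)`. A point `(t, 0)` lies at squared distance `(t - r)² + r²` from the centre, which
exceeds `r²` unless `t = r`; symmetrically on the other axis. Every point of the gadget and the
origin lies on an axis, so the two tangency points are the only ones in the closed disk.
-/

lemma dist_pt (a b c d : ℝ) :
    dist (pt a b) (pt c d) = Real.sqrt ((a - c) ^ 2 + (b - d) ^ 2) := by
  rw [EuclideanSpace.dist_eq]
  congr 1
  simp [pt, Fin.sum_univ_two, Real.dist_eq, sq_abs]

lemma dist_pt_left_eq_abs (a b c : ℝ) : dist (pt a b) (pt a c) = |b - c| := by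
  rw [dist_pt, sub_self, sq, zero_mul, zero_add, Real.sqrt_sq_eq_abs]

lemma dist_pt_right_eq_abs (a b c : ℝ) : dist (pt a c) (pt b c) = |a - b| := by
  rw [dist_pt, sub_self, sq (0 : ℝ), zero_mul, add_zero, Real.sqrt_sq_eq_abs]

lemma lt_dist_pt_of_sq_lt {a b c d r : ℝ} (h : r ^ 2 < (a - c) ^ 2 + (b - d) ^ 2) :
    r < dist (pt a b) (pt c d) := by
  rw [dist_pt]
  exact lt_of_le_of_lt (Real.le_sqrt_of_sq_le le_rfl) (Real.sqrt_lt_sqrt (sq_nonneg r) h)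

lemma lt_dist_pt_diag_of_on_axis {r t : ℝ} {s : Pt} (hs : s = pt t 0 ∨ s = pt 0 t)
    (h₁ : s ≠ pt r 0) (h₂ : s ≠ pt 0 r) : r < dist s (pt r r) := by
  rcases hs with rfl | rfl
  · have ht : t - r ≠ 0 := sub_ne_zero.2 fun h ↦ h₁ (by rw [h])
    exact lt_dist_pt_of_sq_lt (by nlinarith [sq_pos_of_ne_zero ht])
  · have ht : t - r ≠ 0 := sub_ne_zero.2 fun h ↦ h₂ (by rw [h])
    exact lt_dist_pt_of_sq_lt (by nlinarith [sq_pos_of_ne_zero ht])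

lemma exists_eq_pt_axis_of_mem_gadget {n : ℕ} {x : Fin n → ℝ} {s : Pt} (hs : s ∈ gadget n x) :
    ∃ t, s = pt t 0 ∨ s = pt 0 t := by
  simp only [gadget, mem_iUnion, mem_insert_iff, mem_singleton_iff] at hs
  obtain ⟨j, rfl | rfl | rfl | rfl⟩ := hs
  exacts [⟨_, .inl rfl⟩, ⟨_, .inl rfl⟩, ⟨_, .inr rfl⟩, ⟨_, .inr rfl⟩]

theorem stmt6_general (n : ℕ) (x : Fin n → ℝ) (hpos : ∀ i, 0 < x i)
    (i : Fin n) :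
    dist (pt (x i) 0) (pt (x i) (x i)) = x i ∧
    dist (pt 0 (x i)) (pt (x i) (x i)) = x i ∧
    ∀ s ∈ insert (pt 0 0) (gadget n x), s ≠ pt (x i) 0 → s ≠ pt 0 (x i) →
      x i < dist s (pt (x i) (x i)) := by
  have hxi : |x i| = x i := abs_of_pos (hpos i)
  refine ⟨?_, ?_, fun s hs h₁ h₂ ↦ ?_⟩
  · rw [dist_pt_left_eq_abs, zero_sub, abs_neg, hxi]
  · rw [dist_pt_right_eq_abs, zero_sub, abs_neg, hxi]
  · obtain ⟨t, ht⟩ : ∃ t, s = pt t 0 ∨ s = pt 0 t := by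
      rcases hs with rfl | hs
      exacts [⟨0, .inl rfl⟩, exists_eq_pt_axis_of_mem_gadget hs]
    exact lt_dist_pt_diag_of_on_axis ht h₁ h₂

/-- The circle of center `(xᵢ, xᵢ)` and radius `xᵢ` passes through `(xᵢ,0)` and
`(0,xᵢ)` and its closed disk contains no other point of `S ∪ {(0,0)}`,
witnessing the Delaunay adjacency of `(xᵢ,0)` and `(0,xᵢ)`. -/
theorem stmt6 (n : ℕ) (x : Fin n → ℝ) (hpos : ∀ i, 0 < x i)
    (hinj : Function.Injective x) (i : Fin n) :
    dist (pt (x i) 0) (pt (x i) (x i)) = x i ∧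
    dist (pt 0 (x i)) (pt (x i) (x i)) = x i ∧
    ∀ s ∈ insert (pt 0 0) (gadget n x), s ≠ pt (x i) 0 → s ≠ pt 0 (x i) →
      x i < dist s (pt (x i) (x i)) :=
  stmt6_general n x hpos i
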